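/- arXiv:1111.1450 — 6 statements merged into one kernel-verified Lean document; each statement's English description precedes it below -/
import Mathlib

section
/- Let M be a framed POVM on Ω with values in the positive bounded operators on a complex Hilbert space H, and let (S, H♯, V) and (S′, H♯′, V′) be two minimal Naimark representations of M. Then there exists a surjective isometry (unitary) T : H♯ → H♯′ such that V′ ∘ T = V and T⁻¹ S′(ω) T = S(ω) for every Borel set ω ⊆ Ω. -/
noncomputable section

open MeasureTheory ContinuousLinearMap

/-- A positive-operator-valued measure on a topological space `Ω`, with values in the
positive bounded operators on a complex Hilbert space `H`: for every `f : H` the map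
`ω ↦ ⟪f, M ω f⟫` is (the restriction to measurable sets of) a regular Borel measure. -/
def IsPOVM {Ω : Type*} [TopologicalSpace Ω] [MeasurableSpace Ω] [BorelSpace Ω]
    {H : Type*} [NormedAddCommGroup H] [InnerProductSpace ℂ H] [CompleteSpace H]
    (M : Set Ω → H →L[ℂ] H) : Prop :=
  (∀ ω : Set Ω, MeasurableSet ω → (M ω).IsPositive) ∧
    ∀ f : H, ∃ μ : Measure Ω, μ.Regular ∧
      ∀ ω : Set Ω, MeasurableSet ω → ((μ ω).toReal : ℂ) = inner ℂ f (M ω f)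

/-- A framed POVM with frame bounds `0 < A ≤ B < ∞`: `A·1 ≤ M(Ω) ≤ B·1`. -/
def IsFramedPOVM {Ω : Type*} [TopologicalSpace Ω] [MeasurableSpace Ω] [BorelSpace Ω]
    {H : Type*} [NormedAddCommGroup H] [InnerProductSpace ℂ H] [CompleteSpace H]
    (M : Set Ω → H →L[ℂ] H) (A B : ℝ) : Prop :=
  IsPOVM M ∧ 0 < A ∧ A ≤ B ∧
    (M Set.univ - (A : ℂ) • 1).IsPositive ∧ ((B : ℂ) • 1 - M Set.univ).IsPositive

/-- A spectral POVM: a POVM that is multiplicative on intersections. -/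
def IsSpectralPOVM {Ω : Type*} [TopologicalSpace Ω] [MeasurableSpace Ω] [BorelSpace Ω]
    {H : Type*} [NormedAddCommGroup H] [InnerProductSpace ℂ H] [CompleteSpace H]
    (S : Set Ω → H →L[ℂ] H) : Prop :=
  IsPOVM S ∧ ∀ ω₁ ω₂ : Set Ω, MeasurableSet ω₁ → MeasurableSet ω₂ →
    S (ω₁ ∩ ω₂) = S ω₁ * S ω₂

/-- A Naimark representation `(S, H♯, V)` of a POVM `M` on `H`: a spectral POVM `S` on the
auxiliary Hilbert space `H♯` with `S(Ω) = 1` and a bounded linear map `V : H♯ → H` with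
`M(ω) = V S(ω) V*` for all Borel `ω`. -/
def IsNaimarkRep {Ω : Type*} [TopologicalSpace Ω] [MeasurableSpace Ω] [BorelSpace Ω]
    {H : Type*} [NormedAddCommGroup H] [InnerProductSpace ℂ H] [CompleteSpace H]
    {H' : Type*} [NormedAddCommGroup H'] [InnerProductSpace ℂ H'] [CompleteSpace H']
    (M : Set Ω → H →L[ℂ] H) (S : Set Ω → H' →L[ℂ] H') (V : H' →L[ℂ] H) : Prop :=
  IsSpectralPOVM S ∧ S Set.univ = 1 ∧
    ∀ ω : Set Ω, MeasurableSet ω → M ω = V ∘L S ω ∘L adjoint V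

/-- A Naimark representation is minimal if `{S(ω) V* φ : φ ∈ H, ω Borel}` has dense linear
span in `H♯`. -/
def IsMinimalNaimarkRep {Ω : Type*} [TopologicalSpace Ω] [MeasurableSpace Ω] [BorelSpace Ω]
    {H : Type*} [NormedAddCommGroup H] [InnerProductSpace ℂ H] [CompleteSpace H]
    {H' : Type*} [NormedAddCommGroup H'] [InnerProductSpace ℂ H'] [CompleteSpace H']
    (M : Set Ω → H →L[ℂ] H) (S : Set Ω → H' →L[ℂ] H') (V : H' →L[ℂ] H) : Prop :=
  IsNaimarkRep M S V ∧
    Dense ((Submodule.span ℂ {x : H' | ∃ (φ : H) (ω : Set Ω),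
      MeasurableSet ω ∧ x = S ω (adjoint V φ)} : Submodule ℂ H') : Set H')

/-!
The vectors `S(ω) V* φ` span a dense subspace of a minimal representation, and their Gram
matrix `⟪S(ω) V* φ, S(ω') V* ψ⟫ = ⟪φ, M(ω ∩ ω') ψ⟫` depends only on `M`. Hence
`S(ω) V* φ ↦ S'(ω) V'* φ` extends to a unitary `T`; since `V` and `S(ω)` act on these vectors
through `M` and through `ω' ↦ ω ∩ ω'`, identically in both representations, `T` intertwines them.
-/

open Finsupp in
theorem norm_linearCombination_eq_of_inner_eq {𝕜 ι E F : Type*} [RCLike 𝕜]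
    [NormedAddCommGroup E] [InnerProductSpace 𝕜 E] [NormedAddCommGroup F] [InnerProductSpace 𝕜 F]
    {g : ι → E} {g' : ι → F} (hinner : ∀ i j, inner 𝕜 (g i) (g j) = inner 𝕜 (g' i) (g' j))
    (c : ι →₀ 𝕜) : ‖linearCombination 𝕜 g c‖ = ‖linearCombination 𝕜 g' c‖ := by
  simp only [norm_eq_sqrt_re_inner (𝕜 := 𝕜), linearCombination_apply, Finsupp.sum,
    sum_inner, inner_sum, inner_smul_left, inner_smul_right, hinner]

theorem exists_linearIsometryEquiv_of_inner_eq {𝕜 ι E F : Type*} [RCLike 𝕜]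
    [NormedAddCommGroup E] [InnerProductSpace 𝕜 E] [CompleteSpace E]
    [NormedAddCommGroup F] [InnerProductSpace 𝕜 F] [CompleteSpace F]
    {g : ι → E} {g' : ι → F} (hinner : ∀ i j, inner 𝕜 (g i) (g j) = inner 𝕜 (g' i) (g' j))
    (hg : Dense (Submodule.span 𝕜 (Set.range g) : Set E))
    (hg' : Dense (Submodule.span 𝕜 (Set.range g') : Set F)) :
    ∃ T : E ≃ₗᵢ[𝕜] F, ∀ i, T (g i) = g' i := by
  set L := Finsupp.linearCombination 𝕜 g
  set L' := Finsupp.linearCombination 𝕜 g'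
  have hL : DenseRange L := by
    rwa [DenseRange, ← LinearMap.coe_range, Finsupp.range_linearCombination]
  have hLL' := norm_linearCombination_eq_of_inner_eq hinner
  have hbound : ∃ C, ∀ c, ‖L' c‖ ≤ C * ‖L c‖ := ⟨1, fun c => by rw [one_mul, hLL']⟩
  set T₀ := L'.extendOfNorm L
  have hT₀ : ∀ c, T₀ (L c) = L' c := LinearMap.extendOfNorm_eq hL hbound
  have hnorm : ∀ x, ‖T₀ x‖ = ‖x‖ := fun x =>
    hL.induction_on x (isClosed_eq (by fun_prop) continuous_norm)
      fun c => by rw [hT₀, hLL']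
  have hTg : ∀ i, T₀ (g i) = g' i := fun i => by
    simpa [L, L'] using hT₀ (Finsupp.single i 1)
  let T : E →ₗᵢ[𝕜] F := ⟨T₀.toLinearMap, hnorm⟩
  have hrange : Dense (Set.range T) := by
    refine hg'.mono (Submodule.span_le (p := LinearMap.range T.toLinearMap).mpr ?_)
    rintro _ ⟨i, rfl⟩
    exact ⟨g i, hTg i⟩
  have hsurj : Function.Surjective T := by
    rw [← Set.range_eq_univ, ← T.isometry.isClosedEmbedding.isClosed_range.closure_eq,
      hrange.closure_eq]
  exact ⟨.ofSurjective T hsurj, hTg⟩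

def naimarkVector {Ω : Type*} [MeasurableSpace Ω] {H K : Type*}
    [NormedAddCommGroup H] [InnerProductSpace ℂ H] [CompleteSpace H]
    [NormedAddCommGroup K] [InnerProductSpace ℂ K] [CompleteSpace K]
    (S : Set Ω → K →L[ℂ] K) (V : K →L[ℂ] H) (i : H × {ω : Set Ω // MeasurableSet ω}) : K :=
  S i.2 (adjoint V i.1)

section Naimark

variable {Ω : Type*} [TopologicalSpace Ω] [MeasurableSpace Ω] [BorelSpace Ω]
  {H : Type*} [NormedAddCommGroup H] [InnerProductSpace ℂ H] [CompleteSpace H]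
  {K : Type*} [NormedAddCommGroup K] [InnerProductSpace ℂ K] [CompleteSpace K]
  {M : Set Ω → H →L[ℂ] H} {S : Set Ω → K →L[ℂ] K} {V : K →L[ℂ] H}

theorem IsMinimalNaimarkRep.dense_span_range_naimarkVector (h : IsMinimalNaimarkRep M S V) :
    Dense (Submodule.span ℂ (Set.range (naimarkVector S V)) : Set K) := by
  convert h.2 using 4
  ext x
  simp [naimarkVector, eq_comm]

theorem IsNaimarkRep.inner_naimarkVector (h : IsNaimarkRep M S V)
    (i j : H × {ω : Set Ω // MeasurableSet ω}) :
    inner ℂ (naimarkVector S V i) (naimarkVector S V j) = inner ℂ i.1 (M (i.2 ∩ j.2) j.1) := by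
  rw [naimarkVector, naimarkVector, ← adjoint_inner_right,
    (h.1.1.1 i.2 i.2.2).isSelfAdjoint.adjoint_eq, ← mul_apply_eq_comp,
    ← h.1.2 i.2 j.2 i.2.2 j.2.2, adjoint_inner_left, h.2.2 _ (i.2.2.inter j.2.2)]
  rfl

theorem IsNaimarkRep.apply_naimarkVector (h : IsNaimarkRep M S V)
    (i : H × {ω : Set Ω // MeasurableSet ω}) :
    V (naimarkVector S V i) = M i.2 i.1 := by
  rw [h.2.2 i.2 i.2.2]
  rfl

theorem IsNaimarkRep.spectral_apply_naimarkVector (h : IsNaimarkRep M S V) {ω : Set Ω}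
    (hω : MeasurableSet ω) (i : H × {ω : Set Ω // MeasurableSet ω}) :
    S ω (naimarkVector S V i) = naimarkVector S V (i.1, ⟨ω ∩ i.2, hω.inter i.2.2⟩) := by
  rw [naimarkVector, naimarkVector, h.1.2 ω i.2 hω i.2.2]
  rfl

end Naimark

theorem minimal_naimark_rep_unique_general
    {Ω : Type*} [TopologicalSpace Ω] [MeasurableSpace Ω] [BorelSpace Ω]
    {H : Type*} [NormedAddCommGroup H] [InnerProductSpace ℂ H] [CompleteSpace H]
    {H₁ : Type*} [NormedAddCommGroup H₁] [InnerProductSpace ℂ H₁] [CompleteSpace H₁]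
    {H₂ : Type*} [NormedAddCommGroup H₂] [InnerProductSpace ℂ H₂] [CompleteSpace H₂]
    (M : Set Ω → H →L[ℂ] H)
    (S : Set Ω → H₁ →L[ℂ] H₁) (V : H₁ →L[ℂ] H)
    (S' : Set Ω → H₂ →L[ℂ] H₂) (V' : H₂ →L[ℂ] H)
    (hSV : IsMinimalNaimarkRep M S V) (hSV' : IsMinimalNaimarkRep M S' V') :
    ∃ T : H₁ ≃ₗᵢ[ℂ] H₂,
      (∀ x : H₁, V' (T x) = V x) ∧
      ∀ ω : Set Ω, MeasurableSet ω → ∀ x : H₁, T.symm (S' ω (T x)) = S ω x := by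
  have hd := hSV.dense_span_range_naimarkVector
  obtain ⟨T, hT⟩ := exists_linearIsometryEquiv_of_inner_eq
    (fun i j => by rw [hSV.1.inner_naimarkVector, hSV'.1.inner_naimarkVector]) hd
    hSV'.dense_span_range_naimarkVector
  let T₀ : H₁ →L[ℂ] H₂ := T.toContinuousLinearEquiv
  refine ⟨T, fun x => ?_, fun ω hω x => ?_⟩
  · have hV : V' ∘L T₀ = V := ContinuousLinearMap.ext_on hd <| by
      rintro _ ⟨i, rfl⟩
      simp [T₀, hT, hSV.1.apply_naimarkVector, hSV'.1.apply_naimarkVector]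
    exact DFunLike.congr_fun hV x
  · have hS : S' ω ∘L T₀ = T₀ ∘L S ω := ContinuousLinearMap.ext_on hd <| by
      rintro _ ⟨i, rfl⟩
      simp [T₀, hT, hSV.1.spectral_apply_naimarkVector hω,
        hSV'.1.spectral_apply_naimarkVector hω]
    rw [T.symm_apply_eq]
    exact DFunLike.congr_fun hS x

/-- **Essential uniqueness of minimal Naimark representations.** If `(S, H♯, V)` and
`(S', H♯', V')` are two minimal Naimark representations of the same framed POVM `M`, then
there is a surjective isometry (unitary) `T : H♯ → H♯'` with `V' ∘ T = V` and
`T⁻¹ S'(ω) T = S(ω)` for every Borel `ω`. -/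
theorem minimal_naimark_rep_unique
    {Ω : Type*} [TopologicalSpace Ω] [MeasurableSpace Ω] [BorelSpace Ω]
    {H : Type*} [NormedAddCommGroup H] [InnerProductSpace ℂ H] [CompleteSpace H]
    {H₁ : Type*} [NormedAddCommGroup H₁] [InnerProductSpace ℂ H₁] [CompleteSpace H₁]
    {H₂ : Type*} [NormedAddCommGroup H₂] [InnerProductSpace ℂ H₂] [CompleteSpace H₂]
    (M : Set Ω → H →L[ℂ] H) (A B : ℝ) (hM : IsFramedPOVM M A B)
    (S : Set Ω → H₁ →L[ℂ] H₁) (V : H₁ →L[ℂ] H)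
    (S' : Set Ω → H₂ →L[ℂ] H₂) (V' : H₂ →L[ℂ] H)
    (hSV : IsMinimalNaimarkRep M S V) (hSV' : IsMinimalNaimarkRep M S' V') :
    ∃ T : H₁ ≃ₗᵢ[ℂ] H₂,
      (∀ x : H₁, V' (T x) = V x) ∧
      ∀ ω : Set Ω, MeasurableSet ω → ∀ x : H₁, T.symm (S' ω (T x)) = S ω x :=
  minimal_naimark_rep_unique_general M S V S' V' hSV hSV'
end
end

section
/- Suppose M₁ : B(Ω) → P(H₁) and M₂ : B(Ω) → P(H₂) are POVMs that are isomorphic via a unitary transformation U : H₁ → H₂, i.e., U M₁(ω) U⁻¹ = M₂(ω) for all Borel ω ⊆ Ω. Let (S₁, H₁♯, V₁) and (S₂, H₂♯, V₂) be minimal Naimark representations of M₁ and M₂ respectively. Then there exists a unitary transformation U♯ : H₁♯ → H₂♯ such that U♯ S₁(ω) (U♯)⁻¹ = S₂(ω) for all Borel ω, and the diagram commutes: U ∘ V₁ = V₂ ∘ U♯. -/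
noncomputable section

open MeasureTheory ContinuousLinearMap

/-! The vectors `S(ω) V* φ` span `H♯` densely, and their Gram matrix
`⟪S(ω) V* φ, S(ω') V* ψ⟫ = ⟪φ, M(ω ∩ ω') ψ⟫` is determined by the POVM alone. Since `U` carries
the Gram matrix of `M₁` to that of `M₂`, the assignment `S₁(ω) V₁* φ ↦ S₂(ω) V₂* (U φ)` extends to
a unitary `U♯`, and both intertwining relations can be checked on these generators. -/

open Finsupp in
theorem Finsupp.inner_linearCombination_linearCombination {𝕜 E ι : Type*} [RCLike 𝕜]
    [NormedAddCommGroup E] [InnerProductSpace 𝕜 E] (g : ι → E) (c d : ι →₀ 𝕜) :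
    inner 𝕜 (linearCombination 𝕜 g c) (linearCombination 𝕜 g d) =
      c.sum fun i a => starRingEnd 𝕜 a * d.sum fun j b => b * inner 𝕜 (g i) (g j) := by
  simp_rw [linearCombination_apply, Finsupp.sum_inner, inner_smul_left, Finsupp.inner_sum,
    inner_smul_right]

open Finsupp in
theorem exists_linearIsometryEquiv_apply_eq_of_inner_eq {𝕜 E F ι : Type*} [RCLike 𝕜]
    [NormedAddCommGroup E] [InnerProductSpace 𝕜 E] [CompleteSpace E]
    [NormedAddCommGroup F] [InnerProductSpace 𝕜 F] [CompleteSpace F] {g₁ : ι → E} {g₂ : ι → F}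
    (h_inner : ∀ i j, inner 𝕜 (g₁ i) (g₁ j) = inner 𝕜 (g₂ i) (g₂ j))
    (h₁ : Dense (Submodule.span 𝕜 (Set.range g₁) : Set E))
    (h₂ : Dense (Submodule.span 𝕜 (Set.range g₂) : Set F)) :
    ∃ W : E ≃ₗᵢ[𝕜] F, ∀ i, W (g₁ i) = g₂ i := by
  have h_norm : ∀ c, ‖linearCombination 𝕜 g₂ c‖ = ‖linearCombination 𝕜 g₁ c‖ := fun c => by
    simp only [@norm_eq_sqrt_re_inner 𝕜, inner_linearCombination_linearCombination, h_inner]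
  have h_dense₁ : DenseRange (linearCombination 𝕜 g₁) := by
    rwa [DenseRange, ← LinearMap.coe_range, range_linearCombination]
  have h_dense₂ : DenseRange (linearCombination 𝕜 g₂) := by
    rwa [DenseRange, ← LinearMap.coe_range, range_linearCombination]
  refine ⟨(LinearEquiv.refl 𝕜 (ι →₀ 𝕜)).extendOfIsometry _ _ h_dense₁ h_dense₂ h_norm, fun i => ?_⟩
  simpa using (LinearEquiv.refl 𝕜 _).extendOfIsometry_eq _ _ h_dense₁ h_dense₂ h_norm (single i 1)

def naimarkGenerator {Ω H K : Type*} [MeasurableSpace Ω]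
    [NormedAddCommGroup H] [InnerProductSpace ℂ H] [CompleteSpace H]
    [NormedAddCommGroup K] [InnerProductSpace ℂ K] [CompleteSpace K]
    (S : Set Ω → K →L[ℂ] K) (V : K →L[ℂ] H) (p : H × {ω : Set Ω // MeasurableSet ω}) : K :=
  S p.2 (adjoint V p.1)

section Naimark

variable {Ω : Type*} [TopologicalSpace Ω] [MeasurableSpace Ω] [BorelSpace Ω]
  {H : Type*} [NormedAddCommGroup H] [InnerProductSpace ℂ H] [CompleteSpace H]
  {K : Type*} [NormedAddCommGroup K] [InnerProductSpace ℂ K] [CompleteSpace K]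
  {M : Set Ω → H →L[ℂ] H} {S : Set Ω → K →L[ℂ] K} {V : K →L[ℂ] H}

namespace IsNaimarkRep

variable (hN : IsNaimarkRep M S V)
include hN

theorem apply_naimarkGenerator {ω : Set Ω} (hω : MeasurableSet ω)
    (p : H × {ω : Set Ω // MeasurableSet ω}) :
    S ω (naimarkGenerator S V p) = naimarkGenerator S V (p.1, ⟨ω ∩ p.2, hω.inter p.2.2⟩) := by
  rw [naimarkGenerator, naimarkGenerator, hN.1.2 ω p.2 hω p.2.2]
  rfl

theorem map_naimarkGenerator (p : H × {ω : Set Ω // MeasurableSet ω}) :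
    V (naimarkGenerator S V p) = M p.2 p.1 := by
  rw [hN.2.2 p.2 p.2.2]
  rfl

theorem inner_naimarkGenerator (p q : H × {ω : Set Ω // MeasurableSet ω}) :
    inner ℂ (naimarkGenerator S V p) (naimarkGenerator S V q) = inner ℂ p.1 (M (p.2 ∩ q.2) q.1) :=
  calc inner ℂ (naimarkGenerator S V p) (naimarkGenerator S V q)
      = inner ℂ (adjoint V p.1) (S p.2 (naimarkGenerator S V q)) :=
        (hN.1.1.1 p.2 p.2.2).isSymmetric _ _
    _ = inner ℂ p.1 (M (p.2 ∩ q.2) q.1) := by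
        rw [hN.apply_naimarkGenerator p.2.2, adjoint_inner_left, hN.map_naimarkGenerator]

end IsNaimarkRep

theorem IsMinimalNaimarkRep.dense_span_range_naimarkGenerator
    (h : IsMinimalNaimarkRep M S V) :
    Dense (Submodule.span ℂ (Set.range (naimarkGenerator S V)) : Set K) := by
  convert h.2 using 4
  ext x
  constructor
  · rintro ⟨⟨φ, ω, hω⟩, rfl⟩
    exact ⟨φ, ω, hω, rfl⟩
  · rintro ⟨φ, ω, hω, rfl⟩
    exact ⟨(φ, ⟨ω, hω⟩), rfl⟩

end Naimark

section Intertwining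

variable {Ω : Type*} [TopologicalSpace Ω] [MeasurableSpace Ω] [BorelSpace Ω]
  {H₁ : Type*} [NormedAddCommGroup H₁] [InnerProductSpace ℂ H₁] [CompleteSpace H₁]
  {H₂ : Type*} [NormedAddCommGroup H₂] [InnerProductSpace ℂ H₂] [CompleteSpace H₂]
  {K₁ : Type*} [NormedAddCommGroup K₁] [InnerProductSpace ℂ K₁] [CompleteSpace K₁]
  {K₂ : Type*} [NormedAddCommGroup K₂] [InnerProductSpace ℂ K₂] [CompleteSpace K₂]
  {M₁ : Set Ω → H₁ →L[ℂ] H₁} {S₁ : Set Ω → K₁ →L[ℂ] K₁} {V₁ : K₁ →L[ℂ] H₁}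
  {M₂ : Set Ω → H₂ →L[ℂ] H₂} {S₂ : Set Ω → K₂ →L[ℂ] K₂} {V₂ : K₂ →L[ℂ] H₂}

theorem IsMinimalNaimarkRep.comp_eq_comp_of_map_naimarkGenerator
    (h₁ : IsMinimalNaimarkRep M₁ S₁ V₁) (h₂ : IsNaimarkRep M₂ S₂ V₂) {u : H₁ → H₂}
    {W : K₁ →L[ℂ] K₂}
    (hW : ∀ p, W (naimarkGenerator S₁ V₁ p) = naimarkGenerator S₂ V₂ (u p.1, p.2))
    {ω : Set Ω} (hω : MeasurableSet ω) :
    W ∘L S₁ ω = S₂ ω ∘L W := by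
  refine ext_on h₁.dense_span_range_naimarkGenerator ?_
  rintro _ ⟨p, rfl⟩
  simp only [comp_apply, h₁.1.apply_naimarkGenerator hω, hW, h₂.apply_naimarkGenerator hω]

theorem IsMinimalNaimarkRep.comp_eq_comp_of_intertwines
    (h₁ : IsMinimalNaimarkRep M₁ S₁ V₁) (h₂ : IsNaimarkRep M₂ S₂ V₂) {A : H₁ →L[ℂ] H₂}
    (hA : ∀ ω, MeasurableSet ω → ∀ x, A (M₁ ω x) = M₂ ω (A x)) {W : K₁ →L[ℂ] K₂}
    (hW : ∀ p, W (naimarkGenerator S₁ V₁ p) = naimarkGenerator S₂ V₂ (A p.1, p.2)) :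
    A ∘L V₁ = V₂ ∘L W := by
  refine ext_on h₁.dense_span_range_naimarkGenerator ?_
  rintro _ ⟨p, rfl⟩
  simp only [comp_apply, h₁.1.map_naimarkGenerator, hW, h₂.map_naimarkGenerator, hA _ p.2.2]

end Intertwining

theorem naimark_rep_of_isomorphic_povms_general
    {Ω : Type*} [TopologicalSpace Ω] [MeasurableSpace Ω] [BorelSpace Ω]
    {H₁ : Type*} [NormedAddCommGroup H₁] [InnerProductSpace ℂ H₁] [CompleteSpace H₁]
    {H₂ : Type*} [NormedAddCommGroup H₂] [InnerProductSpace ℂ H₂] [CompleteSpace H₂]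
    {K₁ : Type*} [NormedAddCommGroup K₁] [InnerProductSpace ℂ K₁] [CompleteSpace K₁]
    {K₂ : Type*} [NormedAddCommGroup K₂] [InnerProductSpace ℂ K₂] [CompleteSpace K₂]
    (M₁ : Set Ω → H₁ →L[ℂ] H₁) (M₂ : Set Ω → H₂ →L[ℂ] H₂)
    (U : H₁ ≃ₗᵢ[ℂ] H₂)
    (hU : ∀ ω : Set Ω, MeasurableSet ω → ∀ x : H₂, U (M₁ ω (U.symm x)) = M₂ ω x)
    (S₁ : Set Ω → K₁ →L[ℂ] K₁) (V₁ : K₁ →L[ℂ] H₁)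
    (S₂ : Set Ω → K₂ →L[ℂ] K₂) (V₂ : K₂ →L[ℂ] H₂)
    (h₁ : IsMinimalNaimarkRep M₁ S₁ V₁) (h₂ : IsMinimalNaimarkRep M₂ S₂ V₂) :
    ∃ Usharp : K₁ ≃ₗᵢ[ℂ] K₂,
      (∀ ω : Set Ω, MeasurableSet ω → ∀ y : K₂, Usharp (S₁ ω (Usharp.symm y)) = S₂ ω y) ∧
      ∀ x : K₁, U (V₁ x) = V₂ (Usharp x) := by
  have hU_comm : ∀ ω, MeasurableSet ω → ∀ x, U (M₁ ω x) = M₂ ω (U x) := fun ω hω x => by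
    rw [← hU ω hω, U.symm_apply_apply]
  set g₂ := naimarkGenerator S₂ V₂ ∘ Prod.map U id
  have h_inner : ∀ p q, inner ℂ (naimarkGenerator S₁ V₁ p) (naimarkGenerator S₁ V₁ q) =
      inner ℂ (g₂ p) (g₂ q) := fun p q => by
    simp only [g₂, Function.comp_apply, Prod.map_fst, Prod.map_snd, id_eq,
      h₁.1.inner_naimarkGenerator, h₂.1.inner_naimarkGenerator, ← hU_comm _ (p.2.2.inter q.2.2),
      U.inner_map_map]
  have h_dense₂ : Dense (Submodule.span ℂ (Set.range g₂) : Set K₂) := by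
    rw [(U.surjective.prodMap Function.surjective_id).range_comp]
    exact h₂.dense_span_range_naimarkGenerator
  obtain ⟨W, hW⟩ := exists_linearIsometryEquiv_apply_eq_of_inner_eq h_inner
    h₁.dense_span_range_naimarkGenerator h_dense₂
  refine ⟨W, fun ω hω y => ?_, fun x => ?_⟩
  · have hS := h₁.comp_eq_comp_of_map_naimarkGenerator h₂.1 (W := (W : K₁ →L[ℂ] K₂)) hW hω
    simpa using congr($hS (W.symm y))
  · have hV := h₁.comp_eq_comp_of_intertwines h₂.1 (A := (U : H₁ →L[ℂ] H₂)) hU_comm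
      (W := (W : K₁ →L[ℂ] K₂)) hW
    exact congr($hV x)

/-- **Naimark representations of isomorphic POVMs.** If POVMs `M₁` on `H₁` and `M₂` on `H₂`
are isomorphic via a unitary `U : H₁ → H₂` (i.e. `U M₁(ω) U⁻¹ = M₂(ω)` for all Borel `ω`),
and `(Sᵢ, Hᵢ♯, Vᵢ)` are minimal Naimark representations of `Mᵢ`, then there is a unitary
`U♯ : H₁♯ → H₂♯` with `U♯ S₁(ω) (U♯)⁻¹ = S₂(ω)` for all Borel `ω` and `U ∘ V₁ = V₂ ∘ U♯`. -/
theorem naimark_rep_of_isomorphic_povms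
    {Ω : Type*} [TopologicalSpace Ω] [MeasurableSpace Ω] [BorelSpace Ω]
    {H₁ : Type*} [NormedAddCommGroup H₁] [InnerProductSpace ℂ H₁] [CompleteSpace H₁]
    {H₂ : Type*} [NormedAddCommGroup H₂] [InnerProductSpace ℂ H₂] [CompleteSpace H₂]
    {K₁ : Type*} [NormedAddCommGroup K₁] [InnerProductSpace ℂ K₁] [CompleteSpace K₁]
    {K₂ : Type*} [NormedAddCommGroup K₂] [InnerProductSpace ℂ K₂] [CompleteSpace K₂]
    (M₁ : Set Ω → H₁ →L[ℂ] H₁) (M₂ : Set Ω → H₂ →L[ℂ] H₂)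
    (hM₁ : IsPOVM M₁) (hM₂ : IsPOVM M₂)
    (U : H₁ ≃ₗᵢ[ℂ] H₂)
    (hU : ∀ ω : Set Ω, MeasurableSet ω → ∀ x : H₂, U (M₁ ω (U.symm x)) = M₂ ω x)
    (S₁ : Set Ω → K₁ →L[ℂ] K₁) (V₁ : K₁ →L[ℂ] H₁)
    (S₂ : Set Ω → K₂ →L[ℂ] K₂) (V₂ : K₂ →L[ℂ] H₂)
    (h₁ : IsMinimalNaimarkRep M₁ S₁ V₁) (h₂ : IsMinimalNaimarkRep M₂ S₂ V₂) :
    ∃ Usharp : K₁ ≃ₗᵢ[ℂ] K₂,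
      (∀ ω : Set Ω, MeasurableSet ω → ∀ y : K₂, Usharp (S₁ ω (Usharp.symm y)) = S₂ ω y) ∧
      ∀ x : K₁, U (V₁ x) = V₂ (Usharp x) :=
  naimark_rep_of_isomorphic_povms_general M₁ M₂ U hU S₁ V₁ S₂ V₂ h₁ h₂
end
end

section
/- Let M be a framed POVM on Ω with values in the positive bounded operators on a complex Hilbert space H, with frame bounds 0 < A ≤ B < ∞, and let (S, H♯, V) be a Naimark representation of M with S(Ω) = 1, so that A·1 ≤ V V* ≤ B·1. Then V V* is invertible, and the canonical dual POVM M̃(ω) = (V V*)⁻¹ V S(ω) V* (V V*)⁻¹ is a framed POVM on Ω with frame bounds B⁻¹ ≤ A⁻¹; moreover M(Ω) M̃(Ω) = M̃(Ω) M(Ω) = 1_H. -/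
noncomputable section

open MeasureTheory ContinuousLinearMap

/-!
In the C⋆-algebra of bounded operators on `H`, the frame condition reads `A ≤ VV* ≤ B` in the
Loewner order. Hence `VV*` is strictly positive, so invertible, and since inversion is antitone on
strictly positive elements, `B⁻¹ ≤ (VV*)⁻¹ ≤ A⁻¹`. With `W = (VV*)⁻¹` self-adjoint, the dual
`W M(ω) W = W* M(ω) W` is a congruence of `M`: it stays positive, its quadratic forms
`⟨f, W M(·) W f⟩ = ⟨Wf, M(·) Wf⟩` are still regular measures, and at `Ω` it collapses to `W`.
-/

lemma Ring.inverse_algebraMap {𝕜 R : Type*} [Field 𝕜] [Semiring R] [Algebra 𝕜 R] {r : 𝕜}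
    (hr : r ≠ 0) : Ring.inverse (algebraMap 𝕜 R r) = algebraMap 𝕜 R r⁻¹ := by
  simpa using Ring.inverse_unit (Units.map (algebraMap 𝕜 R).toMonoidHom (Units.mk0 r hr))

lemma algebraMap_real_eq_ofReal_smul_one {R : Type*} [Ring R] [Algebra ℂ R] (r : ℝ) :
    algebraMap ℝ R r = (r : ℂ) • 1 := by
  rw [Algebra.algebraMap_eq_smul_one, Complex.coe_smul]

namespace CStarAlgebra

variable {𝓐 : Type*} [CStarAlgebra 𝓐] [PartialOrder 𝓐] [StarOrderedRing 𝓐]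

lemma ringInverse_le_algebraMap_inv {a : 𝓐} {r : ℝ} (hr : 0 < r)
    (h : algebraMap ℝ 𝓐 r ≤ a) : Ring.inverse a ≤ algebraMap ℝ 𝓐 r⁻¹ := by
  simpa [Ring.inverse_algebraMap hr.ne'] using
    ringInverse_le_ringInverse h (isStrictlyPositive_algebraMap hr)

lemma algebraMap_inv_le_ringInverse {a : 𝓐} {r : ℝ} (hr : 0 < r) (ha : IsStrictlyPositive a)
    (h : a ≤ algebraMap ℝ 𝓐 r) : algebraMap ℝ 𝓐 r⁻¹ ≤ Ring.inverse a := by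
  simpa [Ring.inverse_algebraMap hr.ne'] using ringInverse_le_ringInverse h ha

end CStarAlgebra

section POVM

variable {Ω : Type*} [TopologicalSpace Ω] [MeasurableSpace Ω] [BorelSpace Ω]
  {H : Type*} [NormedAddCommGroup H] [InnerProductSpace ℂ H] [CompleteSpace H]
  {H' : Type*} [NormedAddCommGroup H'] [InnerProductSpace ℂ H'] [CompleteSpace H']

lemma IsPOVM.congr {M N : Set Ω → H →L[ℂ] H} (hM : IsPOVM M)
    (h : ∀ ω, MeasurableSet ω → M ω = N ω) : IsPOVM N := by
  refine ⟨fun ω hω => h ω hω ▸ hM.1 ω hω, fun f => ?_⟩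
  obtain ⟨μ, hreg, hμ⟩ := hM.2 f
  exact ⟨μ, hreg, fun ω hω => h ω hω ▸ hμ ω hω⟩

lemma IsPOVM.adjoint_conj {M : Set Ω → H →L[ℂ] H} (hM : IsPOVM M) (W : H' →L[ℂ] H) :
    IsPOVM fun ω => adjoint W ∘L M ω ∘L W := by
  refine ⟨fun ω hω => (hM.1 ω hω).adjoint_conj W, fun f => ?_⟩
  obtain ⟨μ, hreg, hμ⟩ := hM.2 (W f)
  refine ⟨μ, hreg, fun ω hω => ?_⟩
  rw [hμ ω hω, comp_apply, comp_apply, adjoint_inner_right]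

lemma IsNaimarkRep.apply_univ {M : Set Ω → H →L[ℂ] H} {S : Set Ω → H' →L[ℂ] H'}
    {V : H' →L[ℂ] H} (h : IsNaimarkRep M S V) : M Set.univ = V ∘L adjoint V := by
  rw [h.2.2 _ MeasurableSet.univ, h.2.1]
  rfl

lemma isFramedPOVM_iff {M : Set Ω → H →L[ℂ] H} {A B : ℝ} :
    IsFramedPOVM M A B ↔ IsPOVM M ∧ 0 < A ∧ A ≤ B ∧
      algebraMap ℝ (H →L[ℂ] H) A ≤ M Set.univ ∧ M Set.univ ≤ algebraMap ℝ (H →L[ℂ] H) B := by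
  simp only [IsFramedPOVM, le_def, algebraMap_real_eq_ofReal_smul_one]

end POVM

/-- **The canonical dual POVM.** Let `M` be a framed POVM with frame bounds `0 < A ≤ B` and
let `(S, H♯, V)` be a Naimark representation of `M` with `S(Ω) = 1` (so that
`A·1 ≤ V V* ≤ B·1`). Then `V V*` is invertible, with inverse `W`, and the canonical dual
POVM `M̃(ω) = W V S(ω) V* W` is a framed POVM with frame bounds `B⁻¹ ≤ A⁻¹`; moreover
`M(Ω) M̃(Ω) = M̃(Ω) M(Ω) = 1`. -/
theorem canonical_dual_povm
    {Ω : Type*} [TopologicalSpace Ω] [MeasurableSpace Ω] [BorelSpace Ω]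
    {H : Type*} [NormedAddCommGroup H] [InnerProductSpace ℂ H] [CompleteSpace H]
    {H' : Type*} [NormedAddCommGroup H'] [InnerProductSpace ℂ H'] [CompleteSpace H']
    (M : Set Ω → H →L[ℂ] H) (A B : ℝ) (hM : IsFramedPOVM M A B)
    (S : Set Ω → H' →L[ℂ] H') (V : H' →L[ℂ] H) (hrep : IsNaimarkRep M S V) :
    ∃ W : H →L[ℂ] H,
      (W ∘L (V ∘L adjoint V) = 1 ∧ (V ∘L adjoint V) ∘L W = 1) ∧
      IsFramedPOVM (fun ω : Set Ω => W ∘L (V ∘L S ω ∘L adjoint V) ∘L W) B⁻¹ A⁻¹ ∧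
      M Set.univ ∘L (W ∘L (V ∘L S Set.univ ∘L adjoint V) ∘L W) = 1 ∧
      (W ∘L (V ∘L S Set.univ ∘L adjoint V) ∘L W) ∘L M Set.univ = 1 := by
  obtain ⟨hMpovm, hA, hAB, hAle, hleB⟩ := isFramedPOVM_iff.mp hM
  have hB : 0 < B := hA.trans_le hAB
  set T := V ∘L adjoint V
  have hMT : M Set.univ = T := hrep.apply_univ
  rw [hMT] at hAle hleB
  have hT : IsStrictlyPositive T := (isStrictlyPositive_algebraMap hA).of_le hAle
  set W := Ring.inverse T
  have hWT : W * T = 1 := Ring.inverse_mul_cancel T hT.isUnit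
  have hTW : T * W = 1 := Ring.mul_inverse_cancel T hT.isUnit
  have hBW : algebraMap ℝ _ B⁻¹ ≤ W := CStarAlgebra.algebraMap_inv_le_ringInverse hB hT hleB
  have hWA : W ≤ algebraMap ℝ _ A⁻¹ := CStarAlgebra.ringInverse_le_algebraMap_inv hA hAle
  have hW_adj : adjoint W = W := hT.isSelfAdjoint.ringInverse.star_eq
  have hdual_univ : W ∘L (V ∘L S Set.univ ∘L adjoint V) ∘L W = W := by
    rw [← hrep.2.2 _ MeasurableSet.univ, hMT]
    change W * (T * W) = W
    rw [hTW, mul_one]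
  refine ⟨W, ⟨hWT, hTW⟩, isFramedPOVM_iff.mpr
    ⟨?_, inv_pos.2 hB, inv_anti₀ hA hAB, by rwa [hdual_univ], by rwa [hdual_univ]⟩, ?_, ?_⟩
  · refine (hMpovm.adjoint_conj W).congr fun ω hω => ?_
    rw [hW_adj, hrep.2.2 ω hω]
  · rw [hdual_univ, hMT]; exact hTW
  · rw [hdual_univ, hMT]; exact hWT
end
end

section
/- Let (Ω, B, μ) be a measure space with Ω a topological space and B its Borel sets, let Φ : Ω → H be a generalized frame for a separable complex Hilbert space H with unit-norm values and frame bounds 0 < A ≤ B < ∞, and let M(ω) = ∫_ω Π_{Φ(t)} dμ(t) (weakly) be the associated framed POVM. Take H♯ = L²(Ω, μ), the spectral POVM S defined by (S(ω) u)(t) = 1_ω(t) u(t) for u ∈ L²(Ω, μ), and V : L²(Ω, μ) → H given by V(u) = ∫_Ω u(t) Φ(t) dμ(t) (weakly). Then V is a bounded linear map, its adjoint is (V* f)(t) = ⟨Φ(t), f⟩, and M(ω) = V S(ω) V* for every Borel ω ⊆ Ω; i.e., (S, L²(Ω, μ), V) is a Naimark representation of M. -/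
/-! The synthesis operator `V` is the adjoint of the analysis operator `T f = (t ↦ ⟪Φ t, f⟫)`,
which the upper frame bound makes a bounded map `H → L²(μ)`; the lower frame bound is what makes
each coefficient function square integrable (a non-integrable one would have junk integral `0`).
Then `⟪f, V S(ω) V* g⟫ = ⟪T f, 1_ω · T g⟫ = ∫_ω ⟪Φ t, g⟫ ⟪f, Φ t⟫ dμ = ⟪f, M(ω) g⟫`. -/

noncomputable section

open MeasureTheory ContinuousLinearMap

section IndicatorMultiplication

variable {Ω E 𝕜 : Type*} [MeasurableSpace Ω] {μ : Measure Ω} [NormedAddCommGroup E]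
  {p : ENNReal} [Fact (1 ≤ p)] [NormedField 𝕜] [NormedSpace 𝕜 E]
  {S : Set Ω → Lp E p μ →L[𝕜] Lp E p μ}

theorem inter_eq_mul_of_coeFn_eq_indicator
    (hS : ∀ ω, MeasurableSet ω → ∀ u : Lp E p μ, (S ω u : Ω → E) =ᵐ[μ] ω.indicator u)
    {ω₁ ω₂ : Set Ω} (h₁ : MeasurableSet ω₁) (h₂ : MeasurableSet ω₂) :
    S (ω₁ ∩ ω₂) = S ω₁ * S ω₂ := by
  ext1 u
  refine Lp.ext ?_
  filter_upwards [hS _ (h₁.inter h₂) u, hS ω₁ h₁ (S ω₂ u), hS ω₂ h₂ u] with t h₁₂ h₁ h₂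
  rw [mul_apply_eq_comp, h₁₂, h₁, ← Set.indicator_indicator]
  by_cases ht : t ∈ ω₁
  · rw [Set.indicator_of_mem ht, Set.indicator_of_mem ht, h₂]
  · rw [Set.indicator_of_notMem ht, Set.indicator_of_notMem ht]

theorem univ_eq_one_of_coeFn_eq_indicator
    (hS : ∀ ω, MeasurableSet ω → ∀ u : Lp E p μ, (S ω u : Ω → E) =ᵐ[μ] ω.indicator u) :
    S Set.univ = 1 := by
  ext1 u
  refine Lp.ext ?_
  simpa only [one_apply_eq_self, Set.indicator_univ] using hS Set.univ MeasurableSet.univ u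

end IndicatorMultiplication

theorem MeasureTheory.Lp.norm_sq_eq_integral_norm_sq {Ω E : Type*} [MeasurableSpace Ω]
    {μ : Measure Ω} [NormedAddCommGroup E] [InnerProductSpace ℝ E] (u : Lp E 2 μ) :
    ‖u‖ ^ 2 = ∫ t, ‖u t‖ ^ 2 ∂μ := by
  rw [← real_inner_self_eq_norm_sq, L2.inner_def]
  simp only [real_inner_self_eq_norm_sq]

theorem memLp_two_of_integral_norm_sq_ne_zero {Ω E : Type*} [MeasurableSpace Ω]
    {μ : Measure Ω} [NormedAddCommGroup E] {h : Ω → E} (hh : AEStronglyMeasurable h μ)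
    (h0 : ∫ t, ‖h t‖ ^ 2 ∂μ ≠ 0) : MemLp h 2 μ :=
  (memLp_two_iff_integrable_sq_norm hh).2 <| by
    contrapose! h0
    exact integral_undef h0

section FrameAnalysis

variable {Ω 𝕜 H : Type*} [MeasurableSpace Ω] {μ : Measure Ω} [RCLike 𝕜]
  [NormedAddCommGroup H] [InnerProductSpace 𝕜 H] {Φ : Ω → H}

theorem memLp_inner_of_frame_lower_bound [MeasurableSpace H] [OpensMeasurableSpace H]
    (hΦ : Measurable Φ) {A : ℝ} (hA : 0 < A)
    (hlower : ∀ f : H, A * ‖f‖ ^ 2 ≤ ∫ t, ‖(inner 𝕜 (Φ t) f : 𝕜)‖ ^ 2 ∂μ) (f : H) :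
    MemLp (fun t => (inner 𝕜 (Φ t) f : 𝕜)) 2 μ := by
  rcases eq_or_ne f 0 with rfl | hf
  · simp_rw [inner_zero_right]
    exact MemLp.zero
  refine memLp_two_of_integral_norm_sq_ne_zero
    ((continuous_id.inner continuous_const).measurable.comp hΦ).aestronglyMeasurable ?_
  have hpos : 0 < A * ‖f‖ ^ 2 := by positivity
  exact (hpos.trans_le (hlower f)).ne'

variable (hmem : ∀ f : H, MemLp (fun t => (inner 𝕜 (Φ t) f : 𝕜)) 2 μ) {B : ℝ}
  (hupper : ∀ f : H, ∫ t, ‖(inner 𝕜 (Φ t) f : 𝕜)‖ ^ 2 ∂μ ≤ B * ‖f‖ ^ 2)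

def frameAnalysis : H →L[𝕜] Lp 𝕜 2 μ :=
  LinearMap.mkContinuous
    { toFun := fun f => (hmem f).toLp
      map_add' := fun f g => by
        simp_rw [inner_add_right]
        exact (hmem f).toLp_add (hmem g)
      map_smul' := fun c f => by
        simp_rw [inner_smul_right]
        exact (hmem f).toLp_const_smul c }
    (Real.sqrt B) fun f => by
      have hnorm : ‖(hmem f).toLp‖ ^ 2 = ∫ t, ‖(inner 𝕜 (Φ t) f : 𝕜)‖ ^ 2 ∂μ := by
        rw [Lp.norm_sq_eq_integral_norm_sq]
        refine integral_congr_ae ?_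
        filter_upwards [(hmem f).coeFn_toLp] with t ht
        rw [ht]
      calc ‖(hmem f).toLp‖ = Real.sqrt (‖(hmem f).toLp‖ ^ 2) :=
            (Real.sqrt_sq (norm_nonneg _)).symm
        _ ≤ Real.sqrt (B * ‖f‖ ^ 2) := Real.sqrt_le_sqrt (hnorm ▸ hupper f)
        _ = Real.sqrt B * ‖f‖ := by
            rw [Real.sqrt_mul' B (sq_nonneg _), Real.sqrt_sq (norm_nonneg f)]

theorem coeFn_frameAnalysis (f : H) :
    (frameAnalysis hmem hupper f : Ω → 𝕜) =ᵐ[μ] fun t => inner 𝕜 (Φ t) f :=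
  (hmem f).coeFn_toLp

theorem inner_adjoint_frameAnalysis [CompleteSpace H] (u : Lp 𝕜 2 μ) (f : H) :
    inner 𝕜 f (adjoint (frameAnalysis hmem hupper) u) = ∫ t, u t * inner 𝕜 f (Φ t) ∂μ := by
  rw [adjoint_inner_right, L2.inner_def]
  refine integral_congr_ae ?_
  filter_upwards [coeFn_frameAnalysis hmem hupper f] with t ht
  rw [RCLike.inner_apply, ht, inner_conj_symm, mul_comm]

theorem inner_adjoint_frameAnalysis_of_coeFn_eq_indicator [CompleteSpace H] {ω : Set Ω}
    (hω : MeasurableSet ω) {g : H} {v : Lp 𝕜 2 μ}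
    (hv : (v : Ω → 𝕜) =ᵐ[μ] ω.indicator (frameAnalysis hmem hupper g)) (f : H) :
    inner 𝕜 f (adjoint (frameAnalysis hmem hupper) v) =
      ∫ t in ω, inner 𝕜 (Φ t) g * inner 𝕜 f (Φ t) ∂μ := by
  rw [inner_adjoint_frameAnalysis, ← integral_indicator hω]
  refine integral_congr_ae ?_
  filter_upwards [hv, coeFn_frameAnalysis hmem hupper g] with t hvt hgt
  by_cases ht : t ∈ ω
  · simp only [hvt, Set.indicator_of_mem ht, hgt]
  · simp only [hvt, Set.indicator_of_notMem ht, zero_mul]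

end FrameAnalysis

theorem generalized_frame_naimark_representation_general
    {Ω : Type*} [MeasurableSpace Ω]
    {H : Type*} [NormedAddCommGroup H] [InnerProductSpace ℂ H] [CompleteSpace H]
    [MeasurableSpace H] [BorelSpace H]
    (μ : Measure Ω)
    (Φ : Ω → H) (hΦ : Measurable Φ)
    (A B : ℝ) (hA : 0 < A)
    (hframe : ∀ f : H,
      A * ‖f‖ ^ 2 ≤ ∫ t : Ω, ‖(inner ℂ (Φ t) f : ℂ)‖ ^ 2 ∂μ ∧
      (∫ t : Ω, ‖(inner ℂ (Φ t) f : ℂ)‖ ^ 2 ∂μ) ≤ B * ‖f‖ ^ 2)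
    (M : Set Ω → H →L[ℂ] H)
    (hM : ∀ ω : Set Ω, MeasurableSet ω → ∀ f g : H,
      (inner ℂ f (M ω g) : ℂ) = ∫ t in ω, (inner ℂ (Φ t) g : ℂ) * (inner ℂ f (Φ t) : ℂ) ∂μ)
    (S : Set Ω → MeasureTheory.Lp ℂ 2 μ →L[ℂ] MeasureTheory.Lp ℂ 2 μ)
    (hS : ∀ ω : Set Ω, MeasurableSet ω → ∀ u : MeasureTheory.Lp ℂ 2 μ,
      (S ω u : Ω → ℂ) =ᵐ[μ] ω.indicator (u : Ω → ℂ)) :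
    (∀ ω₁ ω₂ : Set Ω, MeasurableSet ω₁ → MeasurableSet ω₂ →
      S (ω₁ ∩ ω₂) = S ω₁ * S ω₂) ∧
    S Set.univ = 1 ∧
    ∃ V : MeasureTheory.Lp ℂ 2 μ →L[ℂ] H,
      (∀ (u : MeasureTheory.Lp ℂ 2 μ) (f : H),
        (inner ℂ f (V u) : ℂ) = ∫ t : Ω, u t * (inner ℂ f (Φ t) : ℂ) ∂μ) ∧
      (∀ f : H, (adjoint V f : Ω → ℂ) =ᵐ[μ] fun t : Ω => (inner ℂ (Φ t) f : ℂ)) ∧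
      ∀ ω : Set Ω, MeasurableSet ω → M ω = V ∘L S ω ∘L adjoint V := by
  have hmem := memLp_inner_of_frame_lower_bound hΦ hA fun f => (hframe f).1
  have hupper := fun f => (hframe f).2
  refine ⟨fun _ _ => inter_eq_mul_of_coeFn_eq_indicator hS, univ_eq_one_of_coeFn_eq_indicator hS,
    adjoint (frameAnalysis hmem hupper), inner_adjoint_frameAnalysis hmem hupper,
    fun f => by simpa only [adjoint_adjoint] using coeFn_frameAnalysis hmem hupper f,
    fun ω hω => ?_⟩
  ext1 g
  refine ext_inner_left ℂ fun f => ?_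
  rw [hM ω hω, adjoint_adjoint, comp_apply, comp_apply,
    inner_adjoint_frameAnalysis_of_coeFn_eq_indicator hmem hupper hω (hS ω hω _)]

/-- **Naimark representation of a generalized frame.** Let `Φ : Ω → H` be a unit-norm
generalized frame with frame bounds `0 < A ≤ B` over `(Ω, 𝔅, μ)`, and let
`M(ω) = ∫_ω Π_{Φ(t)} dμ(t)` (weakly) be the associated framed POVM. Let `S` be the spectral
POVM on `L²(Ω, μ)` of multiplication by indicator functions, `(S ω u)(t) = 1_ω(t) u(t)`.
Then `S` is multiplicative with `S(Ω) = 1`, and there is a bounded linear map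
`V : L²(Ω, μ) → H` with `V u = ∫_Ω u(t) Φ(t) dμ(t)` weakly, whose adjoint is
`(V* f)(t) = ⟪Φ(t), f⟫`, such that `M(ω) = V S(ω) V*` for all Borel `ω`; i.e.
`(S, L²(Ω, μ), V)` is a Naimark representation of `M`. -/
theorem generalized_frame_naimark_representation
    {Ω : Type*} [TopologicalSpace Ω] [MeasurableSpace Ω] [BorelSpace Ω]
    {H : Type*} [NormedAddCommGroup H] [InnerProductSpace ℂ H] [CompleteSpace H]
    [TopologicalSpace.SeparableSpace H] [MeasurableSpace H] [BorelSpace H]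
    (μ : Measure Ω) [μ.Regular]
    (Φ : Ω → H) (hΦ : Measurable Φ) (hΦnorm : ∀ t : Ω, ‖Φ t‖ = 1)
    (A B : ℝ) (hA : 0 < A) (hAB : A ≤ B)
    (hframe : ∀ f : H,
      A * ‖f‖ ^ 2 ≤ ∫ t : Ω, ‖(inner ℂ (Φ t) f : ℂ)‖ ^ 2 ∂μ ∧
      (∫ t : Ω, ‖(inner ℂ (Φ t) f : ℂ)‖ ^ 2 ∂μ) ≤ B * ‖f‖ ^ 2)
    (M : Set Ω → H →L[ℂ] H)
    (hM : ∀ ω : Set Ω, MeasurableSet ω → ∀ f g : H,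
      (inner ℂ f (M ω g) : ℂ) = ∫ t in ω, (inner ℂ (Φ t) g : ℂ) * (inner ℂ f (Φ t) : ℂ) ∂μ)
    (S : Set Ω → MeasureTheory.Lp ℂ 2 μ →L[ℂ] MeasureTheory.Lp ℂ 2 μ)
    (hS : ∀ ω : Set Ω, MeasurableSet ω → ∀ u : MeasureTheory.Lp ℂ 2 μ,
      (S ω u : Ω → ℂ) =ᵐ[μ] ω.indicator (u : Ω → ℂ)) :
    (∀ ω₁ ω₂ : Set Ω, MeasurableSet ω₁ → MeasurableSet ω₂ →
      S (ω₁ ∩ ω₂) = S ω₁ * S ω₂) ∧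
    S Set.univ = 1 ∧
    ∃ V : MeasureTheory.Lp ℂ 2 μ →L[ℂ] H,
      (∀ (u : MeasureTheory.Lp ℂ 2 μ) (f : H),
        (inner ℂ f (V u) : ℂ) = ∫ t : Ω, u t * (inner ℂ f (Φ t) : ℂ) ∂μ) ∧
      (∀ f : H, (adjoint V f : Ω → ℂ) =ᵐ[μ] fun t : Ω => (inner ℂ (Φ t) f : ℂ)) ∧
      ∀ ω : Set Ω, MeasurableSet ω → M ω = V ∘L S ω ∘L adjoint V :=
  generalized_frame_naimark_representation_general μ Φ hΦ A B hA hframe M hM S hS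
end
end

section
/- Let {(W_k, w_k) : k ∈ K} be a fusion frame for a separable complex Hilbert space H with frame bounds 0 < A ≤ B < ∞ and K countable, and assume Σ_{k ∈ K} w_k² < ∞. Let H♯ = ⊕_{k ∈ K} W_k be the Hilbert space direct sum, let S(J) for J ⊆ K be the orthogonal projection of H♯ onto ⊕_{k ∈ J} W_k, and define V : H♯ → H by V({f_k}) = Σ_{k ∈ K} w_k f_k (each f_k ∈ W_k ⊆ H). Then the series defining V converges absolutely in H, V is bounded with ‖V‖ ≤ (Σ_{k ∈ K} w_k²)^{1/2}, the adjoint is V*(φ) = {w_k Π_k(φ)}_{k ∈ K}, S is a spectral POVM with S(K) = 1, M(J) = V S(J) V* for all J ⊆ K where M(J) = Σ_{k ∈ J} w_k² Π_k is the framed POVM of the fusion frame, and A·1 ≤ V V* ≤ B·1. If moreover the fusion frame is tight (A = B), then V V* = A·1. -/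
noncomputable section

open MeasureTheory ContinuousLinearMap

open scoped Classical

/-!
By Cauchy–Schwarz, `∑ |w k| ‖f k‖ ≤ ‖w‖₂ ‖f‖₂`, so the synthesis series `V f = ∑ w k • f k`
converges absolutely and `‖V‖ ≤ ‖w‖₂`. Pairing `V` with the single-coordinate vectors of `⊕ W k`
identifies `V* φ = {w k • Π_k φ}`. Hence `⟪V V* φ, φ⟫ = ‖V* φ‖² = ∑ w_k² ‖Π_k φ‖²`: the fusion
frame inequalities are precisely the Loewner bounds `A ≤ V V* ≤ B`, and the tight case follows
by antisymmetry. In the same way `⟪f, V S(J) V* g⟫ = ∑_{k ∈ J} w_k² ⟪f, Π_k g⟫ = ⟪f, M(J) g⟫`.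
-/

open scoped InnerProductSpace

section CauchySchwarz

variable {ι : Type*} {a b : ι → ℝ}

theorem summable_mul_of_summable_sq (ha : Summable fun i => a i ^ 2)
    (hb : Summable fun i => b i ^ 2) : Summable fun i => a i * b i := by
  refine Summable.of_norm_bounded ((ha.add hb).div_const 2) fun i => ?_
  rw [Real.norm_eq_abs, abs_mul, le_div_iff₀ two_pos, ← sq_abs (a i), ← sq_abs (b i)]
  nlinarith [sq_nonneg (|a i| - |b i|)]

theorem tsum_mul_le_sqrt_mul_sqrt (ha : Summable fun i => a i ^ 2)
    (hb : Summable fun i => b i ^ 2) :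
    ∑' i, a i * b i ≤ √(∑' i, a i ^ 2) * √(∑' i, b i ^ 2) := by
  refine (summable_mul_of_summable_sq ha hb).tsum_le_of_sum_le fun s => ?_
  rw [← Real.sqrt_mul (tsum_nonneg fun i => sq_nonneg _)]
  refine (le_abs_self _).trans (Real.abs_le_sqrt ?_)
  calc (∑ i ∈ s, a i * b i) ^ 2 ≤ (∑ i ∈ s, a i ^ 2) * ∑ i ∈ s, b i ^ 2 :=
        Finset.sum_mul_sq_le_sq_mul_sq s a b
    _ ≤ (∑' i, a i ^ 2) * ∑' i, b i ^ 2 :=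
        mul_le_mul (ha.sum_le_tsum s fun i _ => sq_nonneg _)
          (hb.sum_le_tsum s fun i _ => sq_nonneg _)
          (Finset.sum_nonneg fun i _ => sq_nonneg _) (tsum_nonneg fun i => sq_nonneg _)

end CauchySchwarz

namespace lp

variable {ι : Type*} {G : ι → Type*} [∀ i, NormedAddCommGroup (G i)]

theorem summable_norm_sq (f : lp G 2) : Summable fun i => ‖f i‖ ^ 2 := by
  simpa using (lp.memℓp f).summable (by norm_num)

theorem norm_sq_eq_tsum_norm_sq (f : lp G 2) : ‖f‖ ^ 2 = ∑' i, ‖f i‖ ^ 2 := by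
  simpa using lp.norm_rpow_eq_tsum (by norm_num) f

end lp

section WeightedSynthesis

variable {ι 𝕜 E : Type*} [RCLike 𝕜] [NormedAddCommGroup E] [NormedSpace 𝕜 E]
  (W : ι → Submodule 𝕜 E) {w : ι → ℝ}

theorem summable_norm_ofReal_smul (hw : Summable fun i => w i ^ 2) (f : lp (fun i => W i) 2) :
    Summable fun i => ‖(w i : 𝕜) • (f i : E)‖ := by
  simp only [norm_smul, RCLike.norm_ofReal]
  exact summable_mul_of_summable_sq (by simpa using hw) (lp.summable_norm_sq f)

theorem tsum_norm_ofReal_smul_le (hw : Summable fun i => w i ^ 2) (f : lp (fun i => W i) 2) :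
    ∑' i, ‖(w i : 𝕜) • (f i : E)‖ ≤ √(∑' i, w i ^ 2) * ‖f‖ := by
  simp only [norm_smul, RCLike.norm_ofReal]
  calc ∑' i, |w i| * ‖f i‖ ≤ √(∑' i, |w i| ^ 2) * √(∑' i, ‖f i‖ ^ 2) :=
        tsum_mul_le_sqrt_mul_sqrt (by simpa using hw) (lp.summable_norm_sq f)
    _ = √(∑' i, w i ^ 2) * ‖f‖ := by
        rw [← lp.norm_sq_eq_tsum_norm_sq, Real.sqrt_sq (norm_nonneg f)]
        simp only [sq_abs]

variable [CompleteSpace E]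

def weightedSynthesis (hw : Summable fun i => w i ^ 2) : lp (fun i => W i) 2 →L[𝕜] E :=
  LinearMap.mkContinuous
    { toFun := fun f => ∑' i, (w i : 𝕜) • (f i : E)
      map_add' := fun f g => by
        simp only [lp.coeFn_add, Pi.add_apply, Submodule.coe_add, smul_add]
        exact (summable_norm_ofReal_smul W hw f).of_norm.tsum_add
          (summable_norm_ofReal_smul W hw g).of_norm
      map_smul' := fun c f => by
        simp only [lp.coeFn_smul, Pi.smul_apply, Submodule.coe_smul, smul_comm _ c]
        exact (summable_norm_ofReal_smul W hw f).of_norm.tsum_const_smul c }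
    (√(∑' i, w i ^ 2))
    fun f => (norm_tsum_le_tsum_norm (summable_norm_ofReal_smul W hw f)).trans
      (tsum_norm_ofReal_smul_le W hw f)

theorem hasSum_weightedSynthesis (hw : Summable fun i => w i ^ 2) (f : lp (fun i => W i) 2) :
    HasSum (fun i => (w i : 𝕜) • (f i : E)) (weightedSynthesis W hw f) :=
  (summable_norm_ofReal_smul W hw f).of_norm.hasSum

theorem norm_weightedSynthesis_le (hw : Summable fun i => w i ^ 2) :
    ‖weightedSynthesis W hw‖ ≤ √(∑' i, w i ^ 2) :=
  LinearMap.mkContinuous_norm_le _ (Real.sqrt_nonneg _) _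

end WeightedSynthesis

section FrameOperator

variable {ι 𝕜 E : Type*} [RCLike 𝕜] [NormedAddCommGroup E] [InnerProductSpace 𝕜 E]
  [CompleteSpace E] (W : ι → Submodule 𝕜 E) {w : ι → ℝ}

theorem weightedSynthesis_single [DecidableEq ι] (hw : Summable fun i => w i ^ 2) (i : ι)
    (a : W i) : weightedSynthesis W hw (lp.single 2 i a) = (w i : 𝕜) • (a : E) := by
  refine (hasSum_weightedSynthesis W hw _).unique (hasSum_single i fun j hj => ?_) |>.trans ?_
  · simp [lp.single_apply, hj]
  · simp [lp.single_apply]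

theorem hasSum_inner_weightedSynthesis (hw : Summable fun i => w i ^ 2) (φ : E)
    (f : lp (fun i => W i) 2) :
    HasSum (fun i => (w i : 𝕜) * ⟪φ, (f i : E)⟫_𝕜) ⟪φ, weightedSynthesis W hw f⟫_𝕜 := by
  simpa [inner_smul_right] using (hasSum_weightedSynthesis W hw f).mapL (innerSL 𝕜 φ)

variable [∀ i, CompleteSpace (W i)]

theorem adjoint_weightedSynthesis_apply (hw : Summable fun i => w i ^ 2) (φ : E) (i : ι) :
    (adjoint (weightedSynthesis W hw) φ i : E) =
      (w i : 𝕜) • ((W i).orthogonalProjectionOnto φ : E) := by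
  suffices adjoint (weightedSynthesis W hw) φ i = (w i : 𝕜) • (W i).orthogonalProjectionOnto φ by
    rw [this, Submodule.coe_smul]
  refine ext_inner_left 𝕜 fun a => ?_
  rw [← lp.inner_single_left (𝕜 := 𝕜) (G := fun i => W i), adjoint_inner_right,
    weightedSynthesis_single, inner_smul_left, inner_smul_right,
    Submodule.inner_orthogonalProjectionOnto_eq_of_mem_left, RCLike.conj_ofReal]

theorem re_inner_weightedSynthesis_comp_adjoint (hw : Summable fun i => w i ^ 2) (φ : E) :
    RCLike.re ⟪(weightedSynthesis W hw ∘L adjoint (weightedSynthesis W hw)) φ, φ⟫_𝕜 =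
      ∑' i, w i ^ 2 * ‖((W i).orthogonalProjectionOnto φ : E)‖ ^ 2 := by
  have h := apply_norm_sq_eq_inner_adjoint_left (adjoint (weightedSynthesis W hw)) φ
  rw [adjoint_adjoint] at h
  rw [← h, lp.norm_sq_eq_tsum_norm_sq]
  simp only [Submodule.coe_norm, adjoint_weightedSynthesis_apply, norm_smul, RCLike.norm_ofReal,
    mul_pow, sq_abs]

theorem eq_weightedSynthesis_comp_comp_adjoint (hw : Summable fun i => w i ^ 2) (J : Set ι)
    {T : E →L[𝕜] E}
    (hT : ∀ f g : E, ⟪f, T g⟫_𝕜 =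
      ∑' i : J, ((w (i : ι)) ^ 2 : 𝕜) * ⟪f, ((W (i : ι)).orthogonalProjectionOnto g : E)⟫_𝕜)
    {P : lp (fun i => W i) 2 →L[𝕜] lp (fun i => W i) 2}
    (hP : ∀ f i, P f i = if i ∈ J then f i else 0) :
    T = weightedSynthesis W hw ∘L P ∘L adjoint (weightedSynthesis W hw) := by
  refine ext fun g => ext_inner_left 𝕜 fun f => ?_
  rw [hT, tsum_subtype J fun i => ((w i) ^ 2 : 𝕜) * ⟪f, ((W i).orthogonalProjectionOnto g : E)⟫_𝕜,
    comp_apply, comp_apply, (hasSum_inner_weightedSynthesis W hw f _).tsum_eq.symm]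
  refine tsum_congr fun i => ?_
  by_cases hi : i ∈ J
  · rw [Set.indicator_of_mem hi, hP, if_pos hi, adjoint_weightedSynthesis_apply, inner_smul_right,
      ← mul_assoc, sq]
  · rw [Set.indicator_of_notMem hi, hP, if_neg hi, ZeroMemClass.coe_zero, inner_zero_right,
      mul_zero]

end FrameOperator

namespace ContinuousLinearMap

variable {𝕜 E : Type*} [RCLike 𝕜] [NormedAddCommGroup E] [InnerProductSpace 𝕜 E]

theorem isSymmetric_ofReal_smul_one (c : ℝ) :
    (((c : 𝕜) • 1 : E →L[𝕜] E) : E →ₗ[𝕜] E).IsSymmetric :=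
  LinearMap.IsSymmetric.one.smul (RCLike.conj_ofReal c)

theorem re_inner_ofReal_smul_one_apply (c : ℝ) (x : E) :
    RCLike.re ⟪((c : 𝕜) • (1 : E →L[𝕜] E)) x, x⟫_𝕜 = c * ‖x‖ ^ 2 := by
  simp [inner_smul_left]

theorem ofReal_smul_one_le_iff {T : E →L[𝕜] E} (hT : (T : E →ₗ[𝕜] E).IsSymmetric) (c : ℝ) :
    (c : 𝕜) • 1 ≤ T ↔ ∀ x, c * ‖x‖ ^ 2 ≤ RCLike.re ⟪T x, x⟫_𝕜 := by
  simp only [le_def, isPositive_def, toLinearMap_sub, hT.sub (isSymmetric_ofReal_smul_one c),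
    true_and, reApplyInnerSelf_apply, sub_apply, inner_sub_left, map_sub, sub_nonneg,
    re_inner_ofReal_smul_one_apply]

theorem le_ofReal_smul_one_iff {T : E →L[𝕜] E} (hT : (T : E →ₗ[𝕜] E).IsSymmetric) (c : ℝ) :
    T ≤ (c : 𝕜) • 1 ↔ ∀ x, RCLike.re ⟪T x, x⟫_𝕜 ≤ c * ‖x‖ ^ 2 := by
  simp only [le_def, isPositive_def, toLinearMap_sub, (isSymmetric_ofReal_smul_one c).sub hT,
    true_and, reApplyInnerSelf_apply, sub_apply, inner_sub_left, map_sub, sub_nonneg,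
    re_inner_ofReal_smul_one_apply]

end ContinuousLinearMap

/-- **Naimark representation of a fusion frame.** Let `{(W k, w k)}_{k ∈ K}` be a fusion
frame for `H` with bounds `0 < A ≤ B`, with `∑ k, (w k)² < ∞`, let `H♯ = ⊕_k W k` (the
`ℓ²`-direct sum), let `S J` be the orthogonal projection onto `⊕_{k ∈ J} W k`, and let
`M(J) = ∑_{k ∈ J} w_k² Π_k` (weakly) be the framed POVM of the fusion frame. Then the
series `V {f_k} = ∑ k, w k • f k` converges absolutely and defines a bounded linear map
`V : H♯ → H` with `‖V‖ ≤ (∑ k, w_k²)^½`, adjoint `V* φ = {w k • Π_k φ}`, `S` is a spectral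
POVM with `S(K) = 1`, `M(J) = V S(J) V*` for all `J ⊆ K`, and `A·1 ≤ V V* ≤ B·1`; if the
fusion frame is tight (`A = B`) then `V V* = A·1`. -/
theorem fusion_frame_naimark_representation
    {K : Type*} [Countable K]
    {H : Type*} [NormedAddCommGroup H] [InnerProductSpace ℂ H] [CompleteSpace H]
    [TopologicalSpace.SeparableSpace H]
    (W : K → Submodule ℂ H) [∀ k : K, CompleteSpace (W k)]
    (w : K → ℝ) (hw : ∀ k : K, 0 ≤ w k) (hw₂ : Summable fun k : K => w k ^ 2)
    (A B : ℝ) (hA : 0 < A) (hAB : A ≤ B)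
    (hframe : ∀ f : H,
      A * ‖f‖ ^ 2 ≤ ∑' k : K, w k ^ 2 * ‖((W k).orthogonalProjectionOnto f : H)‖ ^ 2 ∧
      (∑' k : K, w k ^ 2 * ‖((W k).orthogonalProjectionOnto f : H)‖ ^ 2) ≤ B * ‖f‖ ^ 2)
    (M : Set K → H →L[ℂ] H)
    (hM : ∀ (J : Set K) (f g : H),
      (inner ℂ f (M J g) : ℂ) =
        ∑' k : J, ((w (k : K)) ^ 2 : ℂ) *
          inner ℂ f (((W (k : K)).orthogonalProjectionOnto g : H)))
    (S : Set K → lp (fun k : K => W k) 2 →L[ℂ] lp (fun k : K => W k) 2)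
    (hS : ∀ (J : Set K) (f : lp (fun k : K => W k) 2) (k : K),
      S J f k = if k ∈ J then f k else 0) :
    (∀ f : lp (fun k : K => W k) 2,
      Summable fun k : K => ‖(w k : ℂ) • (f k : H)‖) ∧
    ∃ V : lp (fun k : K => W k) 2 →L[ℂ] H,
      (∀ f : lp (fun k : K => W k) 2,
        HasSum (fun k : K => (w k : ℂ) • (f k : H)) (V f)) ∧
      ‖V‖ ≤ Real.sqrt (∑' k : K, w k ^ 2) ∧
      (∀ (φ : H) (k : K),
        (adjoint V φ k : H) = (w k : ℂ) • ((W k).orthogonalProjectionOnto φ : H)) ∧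
      (∀ J₁ J₂ : Set K, S (J₁ ∩ J₂) = S J₁ * S J₂) ∧
      S Set.univ = 1 ∧
      (∀ J : Set K, M J = V ∘L S J ∘L adjoint V) ∧
      ((V ∘L adjoint V - (A : ℂ) • 1).IsPositive ∧
        ((B : ℂ) • 1 - V ∘L adjoint V).IsPositive) ∧
      (A = B → V ∘L adjoint V = (A : ℂ) • 1) := by
  set V := weightedSynthesis W hw₂
  have hsymm : (V ∘L adjoint V : H →ₗ[ℂ] H).IsSymmetric :=
    (isPositive_self_comp_adjoint V).isSymmetric
  have hlower : (A : ℂ) • 1 ≤ V ∘L adjoint V := (ofReal_smul_one_le_iff hsymm A).mpr fun φ => by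
    rw [re_inner_weightedSynthesis_comp_adjoint]
    exact (hframe φ).1
  have hupper : V ∘L adjoint V ≤ (B : ℂ) • 1 := (le_ofReal_smul_one_iff hsymm B).mpr fun φ => by
    rw [re_inner_weightedSynthesis_comp_adjoint]
    exact (hframe φ).2
  refine ⟨summable_norm_ofReal_smul W hw₂, V, hasSum_weightedSynthesis W hw₂,
    norm_weightedSynthesis_le W hw₂, adjoint_weightedSynthesis_apply W hw₂, fun J₁ J₂ => ?_, ?_,
    fun J => eq_weightedSynthesis_comp_comp_adjoint W hw₂ J (hM J) (hS J), ⟨hlower, hupper⟩,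
    fun htight => le_antisymm (htight ▸ hupper) hlower⟩
  · ext f k : 3
    simp only [mul_apply_eq_comp, hS, Set.mem_inter_iff]
    split_ifs <;> simp_all
  · ext f k : 3
    simp [hS]
end
end

section
/- Let M be a framed POVM on Ω with values in the positive bounded operators on a complex Hilbert space H with frame bounds 0 < A ≤ B < ∞, let (S, H♯, V) be a Naimark representation of M with S(Ω) = 1, and suppose H♯ decomposes as an orthogonal direct sum H♯ = ⊕_{n ∈ ℕ} G_n of closed subspaces each invariant under S, i.e., S(ω) G_n ⊆ G_n for all Borel ω and all n. Let P_n denote the orthogonal projection of H♯ onto G_n and set V_n = V P_n. Then: (1) M(ω) = Σ_n V_n S(ω) V_n* for every Borel ω (convergence in the weak operator topology); (2) V_n* V_n V_m* V_m = 0 whenever n ≠ m; and (3) A·1_H ≤ Σ_n V_n V_n* ≤ B·1_H. -/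
/-! Each `G n` is invariant under `S`, so its orthogonal projection `P n` satisfies
`P n S(ω) P n = S(ω) P n`, whence `V_n S(ω) V_n* = V S(ω) P n V*`. Since `G` is a Hilbert sum
decomposition, `∑ P n = 1` strongly, and summing gives `∑ V_n S(ω) V_n* = V S(ω) V* = M(ω)`
weakly. Orthogonality `P m P n = 0` kills the products `V_m* V_m V_n* V_n`, and Parseval at
`V* f` turns `∑ ‖V_n* f‖²` into `‖V* f‖² = ⟪M(Ω) f, f⟫`, which the frame bounds control. -/

noncomputable section

open MeasureTheory ContinuousLinearMap

open scoped InnerProductSpace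
open RCLike Submodule

section Positivity

variable {𝕜 E : Type*} [RCLike 𝕜] [NormedAddCommGroup E] [InnerProductSpace 𝕜 E]

lemma mul_norm_sq_le_re_inner_of_isPositive_sub {T : E →L[𝕜] E} {c : ℝ}
    (hT : (T - (c : 𝕜) • 1).IsPositive) (x : E) : c * ‖x‖ ^ 2 ≤ re ⟪T x, x⟫_𝕜 := by
  simpa [inner_sub_left, inner_smul_left, inner_self_eq_norm_sq_to_K] using
    hT.re_inner_nonneg_left x

lemma re_inner_le_mul_norm_sq_of_isPositive_sub {T : E →L[𝕜] E} {c : ℝ}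
    (hT : ((c : 𝕜) • 1 - T).IsPositive) (x : E) : re ⟪T x, x⟫_𝕜 ≤ c * ‖x‖ ^ 2 := by
  simpa [inner_sub_left, inner_smul_left, inner_self_eq_norm_sq_to_K] using
    hT.re_inner_nonneg_left x

end Positivity

section StarProjection

variable {𝕜 E F : Type*} [RCLike 𝕜] [NormedAddCommGroup E] [InnerProductSpace 𝕜 E]
  [CompleteSpace E] [NormedAddCommGroup F] [InnerProductSpace 𝕜 F] [CompleteSpace F]

lemma IsStarProjection.eq_starProjection {p : E →L[𝕜] E} (hp : IsStarProjection p)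
    {K : Submodule 𝕜 E} [K.HasOrthogonalProjection]
    (hK : LinearMap.range (p : E →ₗ[𝕜] E) = K) : p = K.starProjection := by
  obtain ⟨_, hp⟩ := isStarProjection_iff_eq_starProjection_range.mp hp
  rw [hp]
  congr

lemma adjoint_comp_starProjection (V : E →L[𝕜] F) (K : Submodule 𝕜 E)
    [K.HasOrthogonalProjection] :
    adjoint (V ∘L K.starProjection) = K.starProjection ∘L adjoint V := by
  rw [adjoint_comp, (isSelfAdjoint_starProjection K).adjoint_eq]

lemma Submodule.IsOrtho.adjoint_comp_self_comp_adjoint_comp_self_eq_zero {U W : Submodule 𝕜 E}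
    [U.HasOrthogonalProjection] [W.HasOrthogonalProjection] (h : U ⟂ W) (V : E →L[𝕜] F) :
    adjoint (V ∘L U.starProjection) ∘L (V ∘L U.starProjection) ∘L
      (adjoint (V ∘L W.starProjection) ∘L (V ∘L W.starProjection)) = 0 := by
  simp only [adjoint_comp_starProjection, comp_assoc]
  rw [← comp_assoc U.starProjection W.starProjection, h.starProjection_comp_starProjection]
  simp only [zero_comp, comp_zero]

end StarProjection

namespace OrthogonalFamily

variable {𝕜 E F ι : Type*} [RCLike 𝕜] [NormedAddCommGroup E] [InnerProductSpace 𝕜 E]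
  [CompleteSpace E] [NormedAddCommGroup F] [InnerProductSpace 𝕜 F] [CompleteSpace F]
  {G : ι → Submodule 𝕜 E} [∀ i, CompleteSpace (G i)]

theorem hasSum_starProjection (hG : OrthogonalFamily 𝕜 (fun i => G i) fun i => (G i).subtypeₗᵢ)
    (htotal : ⊤ ≤ (⨆ i, G i).topologicalClosure) (x : E) :
    HasSum (fun i => (G i).starProjection x) x := by
  set e := (IsHilbertSum.mkInternal _ hG htotal).linearIsometryEquiv
  have hsum : HasSum (fun i => ((e x) i : E)) x := by
    simpa [e] using (IsHilbertSum.mkInternal _ hG htotal).hasSum_linearIsometryEquiv_symm (e x)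
  suffices h : ∀ i, (G i).starProjection x = (e x) i by simpa only [h] using hsum
  intro i
  refine ((hsum.mapL (G i).starProjection).unique (hasSum_single i fun j hji => ?_)).trans ?_
  · exact (G i).starProjection_apply_eq_zero_iff.mpr (hG.isOrtho hji ((e x) j).2)
  · exact starProjection_mem_subspace_eq_self _

theorem hasSum_norm_sq_starProjection
    (hG : OrthogonalFamily 𝕜 (fun i => G i) fun i => (G i).subtypeₗᵢ)
    (htotal : ⊤ ≤ (⨆ i, G i).topologicalClosure) (x : E) :
    HasSum (fun i => ‖(G i).starProjection x‖ ^ 2) (‖x‖ ^ 2) := by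
  have h := RCLike.hasSum_re _ ((hG.hasSum_starProjection htotal x).mapL (innerSL 𝕜 x))
  simp only [innerSL_apply_apply, inner_re_symm x, re_inner_starProjection_eq_normSq, coe_norm,
    ← starProjection_apply] at h
  simpa [inner_self_eq_norm_sq] using h

theorem hasSum_norm_sq_adjoint_comp_starProjection
    (hG : OrthogonalFamily 𝕜 (fun i => G i) fun i => (G i).subtypeₗᵢ)
    (htotal : ⊤ ≤ (⨆ i, G i).topologicalClosure) (V : E →L[𝕜] F) (f : F) :
    HasSum (fun i => ‖adjoint (V ∘L (G i).starProjection) f‖ ^ 2) (‖adjoint V f‖ ^ 2) := by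
  simpa only [adjoint_comp_starProjection, comp_apply] using
    hG.hasSum_norm_sq_starProjection htotal (adjoint V f)

theorem hasSum_inner_comp_comp_adjoint
    (hG : OrthogonalFamily 𝕜 (fun i => G i) fun i => (G i).subtypeₗᵢ)
    (htotal : ⊤ ≤ (⨆ i, G i).topologicalClosure) (V : E →L[𝕜] F) {T : E →L[𝕜] E}
    (hT : ∀ i, ∀ x ∈ G i, T x ∈ G i) (f g : F) :
    HasSum (fun i => ⟪f, (V ∘L (G i).starProjection)
        (T (adjoint (V ∘L (G i).starProjection) g))⟫_𝕜) ⟪f, (V ∘L T ∘L adjoint V) g⟫_𝕜 := by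
  have hterm : ∀ i, (V ∘L (G i).starProjection) (T (adjoint (V ∘L (G i).starProjection) g)) =
      V (T ((G i).starProjection (adjoint V g))) := fun i => by
    rw [adjoint_comp_starProjection]
    exact congrArg V ((G i).starProjection_eq_self_iff.mpr (hT i _ (starProjection_apply_mem _ _)))
  simp only [hterm]
  exact (((hG.hasSum_starProjection htotal (adjoint V g)).mapL T).mapL V).mapL (innerSL 𝕜 f)

end OrthogonalFamily

section POVM

variable {Ω : Type*} [TopologicalSpace Ω] [MeasurableSpace Ω] [BorelSpace Ω]
  {H : Type*} [NormedAddCommGroup H] [InnerProductSpace ℂ H] [CompleteSpace H]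
  {H' : Type*} [NormedAddCommGroup H'] [InnerProductSpace ℂ H'] [CompleteSpace H']
  {M : Set Ω → H →L[ℂ] H}

lemma IsFramedPOVM.re_inner_univ_mem_Icc {A B : ℝ} (hM : IsFramedPOVM M A B) (f : H) :
    re ⟪M Set.univ f, f⟫_ℂ ∈ Set.Icc (A * ‖f‖ ^ 2) (B * ‖f‖ ^ 2) :=
  ⟨mul_norm_sq_le_re_inner_of_isPositive_sub hM.2.2.2.1 f,
    re_inner_le_mul_norm_sq_of_isPositive_sub hM.2.2.2.2 f⟩

lemma IsNaimarkRep.norm_sq_adjoint_apply {S : Set Ω → H' →L[ℂ] H'} {V : H' →L[ℂ] H}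
    (hrep : IsNaimarkRep M S V) (f : H) : ‖adjoint V f‖ ^ 2 = re ⟪M Set.univ f, f⟫_ℂ := by
  rw [hrep.2.2 _ MeasurableSet.univ, hrep.2.1, apply_norm_sq_eq_inner_adjoint_left,
    adjoint_adjoint]
  rfl

end POVM

/-- **Decomposition of a framed POVM along an invariant orthogonal decomposition.** Let `M`
be a framed POVM with bounds `0 < A ≤ B`, let `(S, H♯, V)` be a Naimark representation of
`M`, and suppose `H♯ = ⊕_n G n` is an orthogonal decomposition into closed subspaces, each
invariant under `S`, with orthogonal projections `P n` onto `G n`; set `V_n = V ∘ P n`.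
Then `M(ω) = ∑_n V_n S(ω) V_n*` in the weak operator topology, `V_n* V_n V_m* V_m = 0` for
`n ≠ m`, and `A·1 ≤ ∑_n V_n V_n* ≤ B·1` (expressed via the quadratic forms
`∑_n ‖V_n* f‖²`). -/
theorem framed_povm_multiplicity_decomposition
    {Ω : Type*} [TopologicalSpace Ω] [MeasurableSpace Ω] [BorelSpace Ω]
    {H : Type*} [NormedAddCommGroup H] [InnerProductSpace ℂ H] [CompleteSpace H]
    {H' : Type*} [NormedAddCommGroup H'] [InnerProductSpace ℂ H'] [CompleteSpace H']
    (M : Set Ω → H →L[ℂ] H) (A B : ℝ) (hM : IsFramedPOVM M A B)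
    (S : Set Ω → H' →L[ℂ] H') (V : H' →L[ℂ] H) (hrep : IsNaimarkRep M S V)
    (G : ℕ → Submodule ℂ H')
    (hclosed : ∀ n : ℕ, IsClosed (G n : Set H'))
    (horth : ∀ m n : ℕ, m ≠ n → ∀ x ∈ G m, ∀ y ∈ G n, (inner ℂ x y : ℂ) = 0)
    (hspan : (⨆ n : ℕ, G n).topologicalClosure = ⊤)
    (hinv : ∀ ω : Set Ω, MeasurableSet ω → ∀ n : ℕ, ∀ x ∈ G n, S ω x ∈ G n)
    (P : ℕ → H' →L[ℂ] H')
    (hP : ∀ n : ℕ, IsSelfAdjoint (P n) ∧ IsIdempotentElem (P n) ∧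
      LinearMap.range (P n : H' →ₗ[ℂ] H') = G n) :
    (∀ ω : Set Ω, MeasurableSet ω → ∀ f g : H,
      HasSum (fun n : ℕ => (inner ℂ f ((V ∘L P n) (S ω (adjoint (V ∘L P n) g))) : ℂ))
        (inner ℂ f (M ω g))) ∧
    (∀ m n : ℕ, m ≠ n →
      adjoint (V ∘L P m) ∘L (V ∘L P m) ∘L (adjoint (V ∘L P n) ∘L (V ∘L P n)) = 0) ∧
    (∀ f : H,
      A * ‖f‖ ^ 2 ≤ ∑' n : ℕ, ‖adjoint (V ∘L P n) f‖ ^ 2 ∧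
      (∑' n : ℕ, ‖adjoint (V ∘L P n) f‖ ^ 2) ≤ B * ‖f‖ ^ 2) := by
  have : ∀ n, CompleteSpace (G n) := fun n => (hclosed n).completeSpace_coe
  have hG : OrthogonalFamily ℂ (fun n => G n) fun n => (G n).subtypeₗᵢ :=
    fun m n hmn x y => horth m n hmn x x.2 y y.2
  obtain rfl : P = fun n => (G n).starProjection :=
    funext fun n => IsStarProjection.eq_starProjection ⟨(hP n).2.1, (hP n).1⟩ (hP n).2.2
  refine ⟨fun ω hω f g => ?_, fun m n hmn => ?_, fun f => ?_⟩
  · rw [hrep.2.2 ω hω]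
    exact hG.hasSum_inner_comp_comp_adjoint hspan.ge V (hinv ω hω) f g
  · exact (hG.isOrtho hmn).adjoint_comp_self_comp_adjoint_comp_self_eq_zero V
  · rw [(hG.hasSum_norm_sq_adjoint_comp_starProjection hspan.ge V f).tsum_eq,
      hrep.norm_sq_adjoint_apply]
    exact hM.re_inner_univ_mem_Icc f
end
end
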